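/- arXiv:1909.00457 — 8 statements merged into one kernel-verified Lean document; each statement's English description precedes it below -/
import Mathlib

section
/- Let m, n, r be positive integers with r dividing m, rn ≤ m, and n ≤ m. Then the ratio r * C(m-n, m/r - n) / C(m, m/r) equals r^{1-n} * ∏_{x=1}^{n-1} (1 - rx/m)/(1 - x/m), where C denotes the binomial coefficient. -/
/-!
Write `m = r k`. The identity `C(m, k) C(k, n) = C(m, n) C(m - n, k - n)` turns the left side into
`r C(k, n) / C(m, n) = r ∏_{i < n} (k - i) / (m - i)`. The factor `i = 0` is `k / m = 1 / r`, and each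
remaining factor is `r⁻¹ (1 - r x / m) / (1 - x / m)`.
-/

open Finset

theorem Nat.cast_choose_div_cast_choose {K : Type*} [Field K] [CharZero K] (k m n : ℕ) :
    (k.choose n : K) / m.choose n = ∏ i ∈ range n, ((k : K) - i) / ((m : K) - i) := by
  rw [cast_choose_eq_descPochhammer_div, cast_choose_eq_descPochhammer_div,
    div_div_div_cancel_right₀ (cast_ne_zero.2 n.factorial_ne_zero),
    descPochhammer_eval_eq_prod_range, descPochhammer_eval_eq_prod_range, prod_div_distrib]

theorem Nat.cast_choose_sub_div_cast_choose {K : Type*} [Field K] [CharZero K] {k m n : ℕ}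
    (hnk : n ≤ k) (hkm : k ≤ m) :
    ((m - n).choose (k - n) : K) / m.choose k = k.choose n / m.choose n := by
  rw [div_eq_div_iff (cast_ne_zero.2 (choose_pos hkm).ne')
    (cast_ne_zero.2 (choose_pos (hnk.trans hkm)).ne'), mul_comm, mul_comm (k.choose n : K)]
  exact_mod_cast (choose_mul hnk).symm

theorem one_sub_mul_div_div_one_sub_div {K : Type*} [Field K] {r k x : K} (hrk : r * k ≠ 0) :
    (1 - r * x / (r * k)) / (1 - x / (r * k)) = r * ((k - x) / (r * k - x)) := by
  rw [one_sub_div hrk, one_sub_div hrk, div_div_div_cancel_right₀ hrk, mul_div_assoc', mul_sub]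

theorem Finset.prod_Icc_one_eq_prod_range {M : Type*} [CommMonoid M] (g : ℕ → M) (n : ℕ) :
    ∏ x ∈ Icc 1 n, g x = ∏ i ∈ range n, g (i + 1) := by
  rw [← Ico_add_one_right_eq_Icc, prod_Ico_eq_prod_range, add_tsub_cancel_right]
  simp only [add_comm 1]

theorem monochromatic_prob_eq_general (m n r : ℕ) (hn : 0 < n) (hr : 0 < r)
    (hdvd : r ∣ m) (hrn : r * n ≤ m) :
    ((r : ℝ) * ((m - n).choose (m / r - n))) / (m.choose (m / r)) =
      (r : ℝ) ^ (1 - (n : ℤ)) *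
        ∏ x ∈ Finset.Icc 1 (n - 1), (1 - (r : ℝ) * x / m) / (1 - (x : ℝ) / m) := by
  obtain ⟨k, rfl⟩ := hdvd
  obtain ⟨n, rfl⟩ := Nat.exists_eq_add_one_of_ne_zero hn.ne'
  have hnk : n + 1 ≤ k := Nat.le_of_mul_le_mul_left hrn hr
  have hr0 : (r : ℝ) ≠ 0 := by positivity
  have hk0 : (k : ℝ) ≠ 0 := by norm_cast; omega
  rw [Nat.mul_div_cancel_left k hr, mul_div_assoc,
    Nat.cast_choose_sub_div_cast_choose hnk (Nat.le_mul_of_pos_left k hr),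
    Nat.cast_choose_div_cast_choose, prod_range_succ', add_tsub_cancel_right,
    prod_Icc_one_eq_prod_range]
  push_cast
  simp only [one_sub_mul_div_div_one_sub_div (mul_ne_zero hr0 hk0), prod_mul_distrib, prod_const,
    card_range]
  rw [show (1 : ℤ) - (n + 1) = -n by ring, zpow_neg, zpow_natCast, sub_zero, sub_zero]
  field_simp

theorem monochromatic_prob_eq (m n r : ℕ) (hm : 0 < m) (hn : 0 < n) (hr : 0 < r)
    (hdvd : r ∣ m) (hrn : r * n ≤ m) (hnm : n ≤ m) :
    ((r : ℝ) * ((m - n).choose (m / r - n))) / (m.choose (m / r)) =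
      (r : ℝ) ^ (1 - (n : ℤ)) *
        ∏ x ∈ Finset.Icc 1 (n - 1), (1 - (r : ℝ) * x / m) / (1 - (x : ℝ) / m) :=
  monochromatic_prob_eq_general m n r hn hr hdvd hrn
end

section
/- Let m, n, r be positive integers with r ≥ 2, r dividing m, and rn ≤ m. Then r * C(m-n, m/r - n) / C(m, m/r) ≤ r^{1-n} * exp(-n(n-1)(r-1)/(2m)). -/
/-!
Write `k = m / r`. The ratio `C(m - n, k - n) / C(m, k)` equals `∏_{i<n} (k - i) / (m - i)`, and
each factor is `r⁻¹ (m - r i) / (m - i) ≤ r⁻¹ (1 - (r - 1) i / m) ≤ r⁻¹ exp (-(r - 1) i / m)`.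
Multiplying the `n` factors and summing `∑_{i<n} i = n (n - 1) / 2` in the exponent gives the bound.
-/

open Finset Real

theorem Nat.cast_choose_sub_div_choose {K : Type*} [Field K] [CharZero K] {m k n : ℕ}
    (hkm : k ≤ m) (hnk : n ≤ k) :
    ((m - n).choose (k - n) : K) / m.choose k = (k.descFactorial n : K) / m.descFactorial n := by
  have hmk : (m.choose k : K) ≠ 0 := Nat.cast_ne_zero.2 (Nat.choose_pos hkm).ne'
  have hmn : (m.choose n : K) ≠ 0 := Nat.cast_ne_zero.2 (Nat.choose_pos (hnk.trans hkm)).ne'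
  have hchoose : (m.choose k * k.choose n : K) = m.choose n * (m - n).choose (k - n) := by
    exact_mod_cast Nat.choose_mul hnk
  rw [Nat.descFactorial_eq_factorial_mul_choose, Nat.descFactorial_eq_factorial_mul_choose,
    Nat.cast_mul, Nat.cast_mul, mul_div_mul_left _ _ (Nat.cast_ne_zero.2 n.factorial_ne_zero),
    div_eq_div_iff hmk hmn]
  linear_combination -hchoose

theorem Nat.cast_descFactorial_div_descFactorial {K : Type*} [Field K] {m k n : ℕ}
    (hnk : n ≤ k) (hkm : k ≤ m) :
    (k.descFactorial n : K) / m.descFactorial n = ∏ i ∈ range n, ((k : K) - i) / ((m : K) - i) := by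
  rw [Nat.descFactorial_eq_prod_range, Nat.descFactorial_eq_prod_range, Nat.cast_prod,
    Nat.cast_prod, ← prod_div_distrib]
  refine prod_congr rfl fun i hi => ?_
  have hik : i ≤ k := (mem_range.1 hi).le.trans hnk
  rw [Nat.cast_sub hik, Nat.cast_sub (hik.trans hkm)]

theorem div_sub_div_sub_le_inv_mul_exp {m r i : ℝ} (hr : 1 ≤ r) (hi : 0 ≤ i) (him : i < m) :
    (m / r - i) / (m - i) ≤ r⁻¹ * exp (-((r - 1) * i) / m) := by
  have hm : 0 < m := hi.trans_lt him
  have hmi : 0 < m - i := sub_pos.2 him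
  have hfrac : (m - r * i) / (m - i) ≤ -((r - 1) * i) / m + 1 := by
    rw [div_le_iff₀ hmi, ← sub_nonneg]
    have hgap : (-((r - 1) * i) / m + 1) * (m - i) - (m - r * i) = (r - 1) * i ^ 2 / m := by
      field_simp
      ring
    rw [hgap]
    have := sub_nonneg.2 hr
    positivity
  calc (m / r - i) / (m - i) = r⁻¹ * ((m - r * i) / (m - i)) := by field_simp
    _ ≤ r⁻¹ * exp (-((r - 1) * i) / m) := by
        gcongr
        exact hfrac.trans (add_one_le_exp _)

theorem sum_range_natCast_mul_two {R : Type*} [CommRing R] (n : ℕ) :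
    (∑ i ∈ range n, (i : R)) * 2 = n * (n - 1) := by
  induction n with
  | zero => simp
  | succ n ih => rw [sum_range_succ, add_mul, ih]; push_cast; ring

theorem prod_range_inv_mul_exp (r m : ℝ) (n : ℕ) :
    ∏ i ∈ range n, r⁻¹ * exp (-((r - 1) * i) / m) =
      (r ^ n)⁻¹ * exp (-(n * (n - 1) * (r - 1)) / (2 * m)) := by
  rw [prod_mul_distrib, prod_const, card_range, inv_pow, ← exp_sum, ← sum_div, sum_neg_distrib,
    ← mul_sum, ← sum_range_natCast_mul_two]
  congr 2
  ring

theorem choose_sub_div_choose_le {m k n r : ℕ} (hr : 1 ≤ r) (hm : r * k = m) (hnk : n ≤ k) :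
    ((m - n).choose (k - n) : ℝ) / m.choose k ≤
      ((r : ℝ) ^ n)⁻¹ * exp (-(n * (n - 1) * (r - 1)) / (2 * m)) := by
  have hkm : k ≤ m := hm ▸ Nat.le_mul_of_pos_left k hr
  have hr' : (1 : ℝ) ≤ r := by exact_mod_cast hr
  have hk : (k : ℝ) = m / r := by
    rw [eq_div_iff (by positivity), ← Nat.cast_mul, mul_comm, hm]
  rw [Nat.cast_choose_sub_div_choose hkm hnk, Nat.cast_descFactorial_div_descFactorial hnk hkm,
    ← prod_range_inv_mul_exp]
  refine prod_le_prod (fun i hi => ?_) (fun i hi => ?_)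
  · have hik : (i : ℝ) ≤ k := by exact_mod_cast ((mem_range.1 hi).le.trans hnk)
    have hkm' : (k : ℝ) ≤ m := by exact_mod_cast hkm
    exact div_nonneg (sub_nonneg.2 hik) (sub_nonneg.2 (hik.trans hkm'))
  · have him : (i : ℝ) < m := by exact_mod_cast ((mem_range.1 hi).trans_le (hnk.trans hkm))
    rw [hk]
    exact div_sub_div_sub_le_inv_mul_exp hr' i.cast_nonneg him

theorem monochromatic_prob_le_general (m n r : ℕ) (hr : 2 ≤ r)
    (hdvd : r ∣ m) (hrn : r * n ≤ m) :
    ((r : ℝ) * ((m - n).choose (m / r - n))) / (m.choose (m / r)) ≤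
      (r : ℝ) ^ (1 - (n : ℤ)) *
        Real.exp (-((n : ℝ) * ((n : ℝ) - 1) * ((r : ℝ) - 1)) / (2 * m)) := by
  have hr0 : 0 < r := by omega
  have hm : r * (m / r) = m := Nat.mul_div_cancel' hdvd
  have hnk : n ≤ m / r := Nat.le_of_mul_le_mul_left (hm.symm ▸ hrn) hr0
  rw [zpow_sub₀ (by positivity), zpow_one, zpow_natCast, mul_div_assoc,
    div_eq_mul_inv (r : ℝ), mul_assoc]
  exact mul_le_mul_of_nonneg_left (choose_sub_div_choose_le (by omega) hm hnk) (by positivity)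

theorem monochromatic_prob_le (m n r : ℕ) (hm : 0 < m) (hn : 0 < n) (hr : 2 ≤ r)
    (hdvd : r ∣ m) (hrn : r * n ≤ m) :
    ((r : ℝ) * ((m - n).choose (m / r - n))) / (m.choose (m / r)) ≤
      (r : ℝ) ^ (1 - (n : ℤ)) *
        Real.exp (-((n : ℝ) * ((n : ℝ) - 1) * ((r : ℝ) - 1)) / (2 * m)) :=
  monochromatic_prob_le_general m n r hr hdvd hrn
end

section
/- Let H = (V, E) be an n-uniform hypergraph with r ≥ 2 colors, where r divides |V|, |V| < n²(r-1)/(2 ln n), |E| ≤ 0.01 (n/ln n)^{(r-1)/r} r^{n-1}, r < (ln n)^{1/5}, and n is sufficiently large. Then H admits an equitable proper r-coloring, i.e., a partition of V into r independent sets of equal size |V|/r. -/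
/-!
Write `k = |V| / r` and colour `V` through a bijection `V ≃ Fin r × Fin k`, the colour of a vertex
being the first coordinate of its image; every such colouring is equitable. A bijection sends a
given `n`-set into a given row `{c} × Fin k` for at most `(k)_n (rk - n)!` of the `(rk)!`
bijections, so by the union bound over edges and colours a proper one exists as soon as
`|E| r (k)_n < (rk)_n`.

Factor by factor `r (k - i) ≤ (rk - i) exp (-(r - 1) i / (rk))`, hence
`r^n (k)_n / (rk)_n ≤ exp (-(r - 1) n (n - 1) / (2 rk)) ≤ e / n` by the bound on `|V| = rk`,
while the bound on `|E|` gives `|E| ≤ 0.01 n r^(n-1)`. Together `|E| r (k)_n / (rk)_n ≤ 0.01 e < 1`.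
-/

open Finset Real
open scoped Nat

theorem card_equiv_mapsTo_le {β γ : Type*} [Finite β] [Finite γ]
    (h : Nat.card β = Nat.card γ) (s : Set β) (t : Set γ) :
    Nat.card {e : β ≃ γ // Set.MapsTo e s t} ≤
      (Nat.card t).descFactorial (Nat.card s) * (Nat.card β - Nat.card s)! := by
  classical
  have := Fintype.ofFinite β
  have := Fintype.ofFinite γ
  let Φ (e : {e : β ≃ γ // Set.MapsTo e s t}) :
      Σ j : s ↪ t, ↥sᶜ ↪ ↥(Set.range fun x : s ↦ (j x : γ))ᶜ :=
    ⟨⟨e.2.restrict, (Set.MapsTo.restrict_inj e.2).2 e.1.injective.injOn⟩,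
      ⟨fun x ↦ ⟨e.1 x, fun ⟨y, hy⟩ ↦ x.2 (e.1.injective hy ▸ y.2)⟩,
        fun x y hxy ↦ Subtype.ext (e.1.injective (congrArg Subtype.val hxy))⟩⟩
  have hΦ : Function.Injective Φ := by
    rintro ⟨e₁, _⟩ ⟨e₂, _⟩ h
    refine Subtype.ext (Equiv.ext fun b ↦ ?_)
    by_cases hb : b ∈ s
    · exact congrArg (fun p ↦ (p.1 ⟨b, hb⟩ : γ)) h
    · exact congrArg (fun p ↦ (p.2 ⟨b, hb⟩ : γ)) h
  have hfiber (j : s ↪ t) : Nat.card (↥sᶜ ↪ ↥(Set.range fun x : s ↦ (j x : γ))ᶜ) =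
      (Nat.card β - Nat.card s)! := by
    have hj : Function.Injective fun x : s ↦ (j x : γ) := Subtype.val_injective.comp j.injective
    simp only [Nat.card_eq_fintype_card] at h ⊢
    rw [Fintype.card_embedding_eq, Fintype.card_compl_set, Fintype.card_compl_set,
      Set.card_range_of_injective hj, h, Nat.descFactorial_self]
  calc Nat.card {e : β ≃ γ // Set.MapsTo e s t}
      ≤ Nat.card (Σ j : s ↪ t, ↥sᶜ ↪ ↥(Set.range fun x : s ↦ (j x : γ))ᶜ) :=
        Nat.card_le_card_of_injective Φ hΦ
    _ = _ := by
      rw [Nat.card_sigma]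
      simp only [hfiber, sum_const, card_univ, smul_eq_mul]
      simp only [Nat.card_eq_fintype_card, Fintype.card_embedding_eq]

theorem exists_equiv_forall_not_mapsTo {β γ ι : Type*} [Finite β] [Finite γ]
    (h : Nat.card β = Nat.card γ) (S : ι → Set β) (T : ι → Set γ) (I : Finset ι) {n k : ℕ}
    (hS : ∀ i ∈ I, Nat.card (S i) = n) (hT : ∀ i ∈ I, Nat.card (T i) = k)
    (hI : #I * (k.descFactorial n * (Nat.card β - n)!) < (Nat.card β)!) :
    ∃ e : β ≃ γ, ∀ i ∈ I, ¬ Set.MapsTo e (S i) (T i) := by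
  classical
  have := Fintype.ofFinite β
  have := Fintype.ofFinite γ
  by_contra! hbad
  have hcover : (univ : Finset (β ≃ γ)) ⊆ I.biUnion fun i ↦ {e | Set.MapsTo e (S i) (T i)} :=
    fun e _ ↦ by simpa using hbad e
  refine hI.not_ge ?_
  calc (Nat.card β)! = #(univ : Finset (β ≃ γ)) := by
        rw [card_univ, Fintype.card_equiv (Finite.card_eq.1 h).some, Nat.card_eq_fintype_card]
    _ ≤ ∑ i ∈ I, #{e : β ≃ γ | Set.MapsTo e (S i) (T i)} :=
        (card_le_card hcover).trans card_biUnion_le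
    _ ≤ ∑ _i ∈ I, k.descFactorial n * (Nat.card β - n)! := sum_le_sum fun i hi ↦ by
        rw [← Fintype.card_subtype, ← Nat.card_eq_fintype_card, ← hS i hi, ← hT i hi]
        exact card_equiv_mapsTo_le h _ _
    _ = #I * (k.descFactorial n * (Nat.card β - n)!) := by rw [sum_const, smul_eq_mul]

theorem card_filter_eq_of_equiv_prod {α : Type*} {V : Finset α} {r k : ℕ}
    (e : V ≃ Fin r × Fin k) (f : α → Fin r) (hf : ∀ v : V, f v = (e v).1) (c : Fin r) :
    #{v ∈ V | f v = c} = k := by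
  rw [← card_fin k]
  refine card_bij' (fun v hv ↦ (e ⟨v, (mem_filter.1 hv).1⟩).2) (fun p _ ↦ e.symm (c, p))
    (fun _ _ ↦ mem_univ _) (fun p _ ↦ ?_) (fun v hv ↦ ?_) (fun p _ ↦ ?_)
  · simp [hf]
  · obtain ⟨hvV, hvc⟩ := mem_filter.1 hv
    have hc : (e ⟨v, hvV⟩).1 = c := hf ⟨v, hvV⟩ ▸ hvc
    simp [← hc]
  · simp

theorem exists_equitable_coloring_of_card_mul_lt {α : Type*} (V : Finset α)
    (E : Finset (Finset α)) {r k n : ℕ} (hr : 0 < r) (hV : #V = r * k)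
    (hE : ∀ A ∈ E, A ⊆ V ∧ #A = n)
    (h : #E * r * (k.descFactorial n * (r * k - n)!) < (r * k)!) :
    ∃ f : α → Fin r, (∀ c, #{v ∈ V | f v = c} = k) ∧ ∀ A ∈ E, ¬ ∃ c, ∀ v ∈ A, f v = c := by
  classical
  have hS : ∀ i ∈ E ×ˢ (univ : Finset (Fin r)),
      Nat.card (Subtype.val ⁻¹' (i.1 : Set α) : Set V) = n := by
    intro i hi
    obtain ⟨hAV, hAn⟩ := hE _ (mem_product.1 hi).1
    rw [Nat.card_preimage_of_injective Subtype.val_injective (by simpa using hAV),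
      Nat.card_coe_set_eq, Set.ncard_coe_finset, hAn]
  have hT (c : Fin r) : Nat.card (Set.range (Prod.mk c : Fin k → Fin r × Fin k)) = k := by
    rw [Nat.card_range_of_injective (Prod.mk_right_injective c), Nat.card_fin]
  obtain ⟨e, he⟩ := exists_equiv_forall_not_mapsTo (γ := Fin r × Fin k) (by simp [hV]) _
    (fun i ↦ Set.range (Prod.mk i.2)) _ hS (fun i _ ↦ hT i.2) (by simpa [hV, mul_assoc] using h)
  let f (v : α) : Fin r := if hv : v ∈ V then (e ⟨v, hv⟩).1 else ⟨0, hr⟩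
  have hf (v : V) : f v = (e v).1 := dif_pos v.2
  refine ⟨f, card_filter_eq_of_equiv_prod e f hf, fun A hA ⟨c, hc⟩ ↦ ?_⟩
  refine he (A, c) (by simpa using hA) fun v hv ↦ ?_
  exact ⟨(e v).2, Prod.ext (by simpa [hf] using (hc v hv).symm) rfl⟩

theorem mul_sub_le_sub_mul_exp {r k i : ℝ} (hr : 1 ≤ r) (hk : 0 < k) (hik : i ≤ r * k) :
    r * (k - i) ≤ (r * k - i) * exp (-((r - 1) * i / (r * k))) := by
  have hrk : 0 < r * k := by positivity
  calc r * (k - i) ≤ r * (k - i) + (r - 1) * i ^ 2 / (r * k) :=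
        le_add_of_nonneg_right (div_nonneg (mul_nonneg (sub_nonneg.2 hr) (sq_nonneg i)) hrk.le)
    _ = (r * k - i) * (-((r - 1) * i / (r * k)) + 1) := by field_simp; ring
    _ ≤ (r * k - i) * exp (-((r - 1) * i / (r * k))) :=
        mul_le_mul_of_nonneg_left (add_one_le_exp _) (sub_nonneg.2 hik)

theorem cast_descFactorial_eq_prod {a n : ℕ} (h : n ≤ a) :
    (a.descFactorial n : ℝ) = ∏ i ∈ range n, ((a : ℝ) - i) := by
  rw [Nat.descFactorial_eq_prod_range, Nat.cast_prod]
  exact prod_congr rfl fun i hi ↦ Nat.cast_sub ((mem_range.1 hi).le.trans h)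

theorem descFactorial_mul_pow_le {r k n : ℕ} (hr : 1 ≤ r) (hnk : n ≤ k) :
    (k.descFactorial n : ℝ) * r ^ n ≤
      (r * k).descFactorial n * exp (-((r - 1) * (∑ i ∈ range n, (i : ℝ)) / (r * k))) := by
  have hr' : (1 : ℝ) ≤ r := by exact_mod_cast hr
  have hi (i : ℕ) (hi : i ∈ range n) : (i : ℝ) < k := by
    exact_mod_cast (mem_range.1 hi).trans_le hnk
  calc (k.descFactorial n : ℝ) * r ^ n = ∏ i ∈ range n, (r * ((k : ℝ) - i)) := by
        rw [cast_descFactorial_eq_prod hnk, prod_mul_distrib, prod_const, card_range, mul_comm]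
    _ ≤ ∏ i ∈ range n, ((r * k - i) * exp (-((r - 1) * i / (r * k)))) := by
        refine prod_le_prod (fun i hi' ↦ mul_nonneg r.cast_nonneg (sub_nonneg.2 (hi i hi').le))
          fun i hi' ↦ mul_sub_le_sub_mul_exp hr' ((Nat.cast_nonneg i).trans_lt (hi i hi'))
            (by nlinarith [hi i hi'])
    _ = _ := by
        rw [prod_mul_distrib, ← exp_sum, sum_neg_distrib, mul_sum, sum_div,
          cast_descFactorial_eq_prod (hnk.trans (Nat.le_mul_of_pos_left k hr)), Nat.cast_mul]

theorem sum_range_cast_id {K : Type*} [Field K] [CharZero K] (n : ℕ) :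
    ∑ i ∈ range n, (i : K) = n * (n - 1) / 2 := by
  induction n with
  | zero => simp
  | succ n ih => rw [sum_range_succ, ih]; push_cast; field_simp; ring

theorem exp_neg_mul_sum_range_div_le {n : ℕ} {a m : ℝ} (hn : 1 < n) (hm : 0 < m)
    (h : m < n ^ 2 * a / (2 * log n)) :
    exp (-(a * (∑ i ∈ range n, (i : ℝ)) / m)) ≤ exp 1 / n := by
  have hn0 : (0 : ℝ) < n := by positivity
  have hn1 : (1 : ℝ) ≤ n := by exact_mod_cast hn.le
  have hL : 0 < log n := log_pos (by exact_mod_cast hn)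
  have h' : m * (2 * log n) < n ^ 2 * a := (lt_div_iff₀ (by positivity)).1 h
  have hexp : (n - 1) / n * log n ≤ a * (∑ i ∈ range n, (i : ℝ)) / m := by
    rw [sum_range_cast_id, le_div_iff₀ hm]
    calc (n - 1) / n * log n * m = (n - 1) / (2 * n) * (m * (2 * log n)) := by field_simp
      _ ≤ (n - 1) / (2 * n) * (n ^ 2 * a) :=
        mul_le_mul_of_nonneg_left h'.le (div_nonneg (by linarith) (by positivity))
      _ = a * (n * (n - 1) / 2) := by field_simp
  calc exp (-(a * (∑ i ∈ range n, (i : ℝ)) / m)) ≤ exp (-((n - 1) / n * log n)) :=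
        exp_le_exp.2 (neg_le_neg hexp)
    _ = exp (log n / n) / n := by
        rw [show -((n - 1) / n * log n) = log n / n - log n by field_simp; ring, exp_sub,
          exp_log hn0]
    _ ≤ exp 1 / n := by
        gcongr
        exact (div_le_one hn0).2 (log_le_self hn0.le)

theorem div_log_rpow_le_self {x p : ℝ} (hx : exp 1 ≤ x) (hp : p ≤ 1) :
    (x / log x) ^ p ≤ x := by
  have hx0 : 0 < x := (exp_pos 1).trans_le hx
  have hL : 1 ≤ log x := (le_log_iff_exp_le hx0).2 hx
  have h1 : 1 ≤ x / log x := (one_le_div (by positivity)).2 (log_le_self hx0.le)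
  calc (x / log x) ^ p ≤ (x / log x) ^ (1 : ℝ) := rpow_le_rpow_of_exponent_le h1 hp
    _ = x / log x := rpow_one _
    _ ≤ x := div_le_self hx0.le hL

theorem mul_descFactorial_lt {n r k m : ℕ} (hn : 3 ≤ n) (hr : 2 ≤ r) (hnrk : n ≤ r * k)
    (hrk : (r * k : ℝ) < n ^ 2 * (r - 1) / (2 * log n))
    (hm : (m : ℝ) ≤ 0.01 * (n / log n) ^ ((r - 1) / r : ℝ) * r ^ (n - 1)) :
    m * r * k.descFactorial n < (r * k).descFactorial n := by
  rcases lt_or_ge k n with hkn | hkn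
  · rw [Nat.descFactorial_eq_zero_iff_lt.2 hkn, mul_zero]
    exact Nat.descFactorial_pos.2 hnrk
  have hrk0 : (0 : ℝ) < r * k := by
    exact_mod_cast (show 0 < 3 by norm_num).trans_le (hn.trans hnrk)
  have hr0 : (0 : ℝ) < r := by positivity
  have hm' : (m : ℝ) ≤ 0.01 * n * r ^ (n - 1) := by
    refine hm.trans ?_
    gcongr
    refine div_log_rpow_le_self ?_ (div_le_one_of_le₀ (by linarith) hr0.le)
    have : (3 : ℝ) ≤ n := by exact_mod_cast hn
    linarith [exp_one_lt_d9]
  have hexp := exp_neg_mul_sum_range_div_le (a := r - 1) (by omega) hrk0 hrk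
  have hpos : (0 : ℝ) < (r * k).descFactorial n := by exact_mod_cast Nat.descFactorial_pos.2 hnrk
  suffices (m : ℝ) * r * k.descFactorial n < (r * k).descFactorial n by exact_mod_cast this
  calc (m : ℝ) * r * k.descFactorial n ≤ 0.01 * n * r ^ (n - 1) * r * k.descFactorial n := by
        gcongr
    _ = 0.01 * n * (k.descFactorial n * r ^ n) := by
        rw [← pow_sub_one_mul (by omega : n ≠ 0) (r : ℝ)]; ring
    _ ≤ 0.01 * n * ((r * k).descFactorial n * (exp 1 / n)) := by
        refine mul_le_mul_of_nonneg_left ?_ (by positivity)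
        exact (descFactorial_mul_pow_le (by omega) hkn).trans
          (mul_le_mul_of_nonneg_left hexp (Nat.cast_nonneg _))
    _ = 0.01 * exp 1 * (r * k).descFactorial n := by field_simp
    _ < (r * k).descFactorial n := by nlinarith [exp_one_lt_d9]

theorem few_vertices_equitable_colorable :
    ∃ N : ℕ, ∀ n : ℕ, N ≤ n →
      ∀ (α : Type) (V : Finset α) (E : Finset (Finset α)) (r : ℕ),
        2 ≤ r →
        (∀ A ∈ E, A ⊆ V ∧ A.card = n) →
        r ∣ V.card →
        ((V.card : ℝ) < (n : ℝ) ^ 2 * ((r : ℝ) - 1) / (2 * Real.log n)) →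
        ((E.card : ℝ) ≤ 0.01 * ((n : ℝ) / Real.log n) ^ (((r : ℝ) - 1) / r) * (r : ℝ) ^ (n - 1)) →
        ((r : ℝ) < (Real.log n) ^ ((1 : ℝ) / 5)) →
        ∃ f : α → Fin r,
          (∀ c : Fin r, (V.filter (fun v => f v = c)).card = V.card / r) ∧
          (∀ A ∈ E, ¬ ∃ c : Fin r, ∀ v ∈ A, f v = c) := by
  refine ⟨3, fun n hn α V E r hr hE ⟨k, hV⟩ hVlt hElt _ ↦ ?_⟩
  have hr0 : 0 < r := by omega
  rw [hV, Nat.mul_div_cancel_left k hr0]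
  refine exists_equitable_coloring_of_card_mul_lt V E hr0 hV hE ?_
  rcases E.eq_empty_or_nonempty with rfl | ⟨A, hA⟩
  · simpa using (r * k).factorial_pos
  have hnrk : n ≤ r * k := hV ▸ (hE A hA).2 ▸ card_le_card (hE A hA).1
  rw [hV, Nat.cast_mul] at hVlt
  calc #E * r * (k.descFactorial n * (r * k - n)!)
      = #E * r * k.descFactorial n * (r * k - n)! := by ring
    _ < (r * k).descFactorial n * (r * k - n)! :=
        Nat.mul_lt_mul_of_pos_right (mul_descFactorial_lt hn hr hnrk hVlt hElt)
          (r * k - n).factorial_pos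
    _ = (r * k)! := by rw [mul_comm, Nat.factorial_mul_descFactorial hnrk]
end

section
/- Let n ≥ 2, r ≥ 2 be integers with r < (ln n)^{1/5}, let p = ((r-1)/r) * ln(n/ln n)/n, and let k be an integer with 1 ≤ k ≤ r. Then (p/(r-1))^{k-1} * r^{-k(n-2)-2} * exp((n-2)(-pk + (k-1)pr/(r-1))) * exp(2p/(r-1)) ≤ 2 * (ln n / n)^{k(r-1)/r} * r^{-k(n-1)-1}, for all sufficiently large n. -/
/-!
Write `L = log n` and `M = log (n / L)`, so that `p = (r - 1) / r * M / n`. The powers of `r`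
combine exactly, and the exponent of the two exponentials equals
`M * (2 + 2 * (r - k)) / (r * n) - (r - k) / r * M`. The second term exponentiates to
`(L / n) ^ ((r - k) / r)`, the first is at most `2 * L / n ≤ log 2` once `n` is large, and
`M ≤ L` bounds `(M / n) ^ (k - 1)` by `(L / n) ^ (k - 1)`.
-/

open Real Filter

lemma chain_exponent_eq {n r k M : ℝ} (hn : n ≠ 0) (hr : r ≠ 0) (hr1 : r - 1 ≠ 0) :
    (n - 2) * (-((r - 1) / r * M / n * k) + (k - 1) * ((r - 1) / r * M / n) * r / (r - 1)) +
      2 * ((r - 1) / r * M / n) / (r - 1) =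
    M * (2 + 2 * (r - k)) / (r * n) + -M * ((r - k) / r) := by
  field_simp
  ring

lemma inv_pow_mul_zpow_chain {r : ℝ} (hr : r ≠ 0) {n k : ℕ} (hn : 2 ≤ n) (hk : 1 ≤ k) :
    r⁻¹ ^ (k - 1) * r ^ (-((k * (n - 2) : ℕ) : ℤ) - 2) = r ^ (-((k * (n - 1) : ℕ) : ℤ) - 1) := by
  rw [inv_pow, ← zpow_natCast, ← zpow_neg, ← zpow_add₀ hr]
  congr 1
  push_cast [Nat.cast_sub hn, Nat.cast_sub hk, Nat.cast_sub (by omega : 1 ≤ n)]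
  ring

lemma rpow_pred_mul_rpow {x : ℝ} (hx : 0 < x) {r : ℝ} (hr : r ≠ 0) {k : ℕ} (hk : 1 ≤ k) :
    x ^ (k - 1) * x ^ ((r - k) / r) = x ^ (k * (r - 1) / r) := by
  rw [← rpow_natCast, ← rpow_add hx]
  congr 1
  push_cast [Nat.cast_sub hk]
  field_simp
  ring

lemma exp_chain_error_le_two {n r k M L : ℝ} (hn : 0 < n) (hk : 1 ≤ k) (hkr : k ≤ r)
    (hM : 0 ≤ M) (hML : M ≤ L) (hL : 2 * L / n ≤ log 2) :
    exp (M * (2 + 2 * (r - k)) / (r * n)) ≤ 2 := by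
  have hr : 0 < r := by linarith
  calc exp (M * (2 + 2 * (r - k)) / (r * n)) ≤ exp (2 * L / n) := by
        refine exp_le_exp.2 ?_
        rw [div_le_div_iff₀ (by positivity) hn]
        nlinarith [mul_le_mul_of_nonneg_left hk hM, mul_le_mul_of_nonneg_right hML hr.le]
    _ ≤ exp (log 2) := exp_le_exp.2 hL
    _ = 2 := exp_log two_pos

lemma eventually_log_natCast_bounds :
    ∀ᶠ n : ℕ in atTop, 2 ≤ n ∧ 1 ≤ log n ∧ 2 * log n / n ≤ log 2 := by
  have hlog : ∀ᶠ x : ℝ in atTop, 1 ≤ log x ∧ 2 * log x / x ≤ log 2 := by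
    filter_upwards [tendsto_log_atTop.eventually_ge_atTop 1,
      isLittleO_log_id_atTop.def (half_pos (log_pos one_lt_two)), eventually_gt_atTop 0]
      with x hx1 hxo hx0
    refine ⟨hx1, ?_⟩
    rw [norm_of_nonneg (by linarith), id, norm_of_nonneg hx0.le] at hxo
    rw [div_le_iff₀ hx0]
    linarith
  exact (eventually_ge_atTop 2).and (tendsto_natCast_atTop_atTop.eventually hlog)

lemma chain_prob_bound_of_log_le {n r k : ℕ} {p : ℝ} (hn : 2 ≤ n) (hr : 2 ≤ r) (hk : 1 ≤ k)
    (hkr : k ≤ r) (hL : 1 ≤ log n) (hsmall : 2 * log n / n ≤ log 2)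
    (hp : p = ((r : ℝ) - 1) / r * log ((n : ℝ) / log n) / n) :
    (p / ((r : ℝ) - 1)) ^ (k - 1) * (r : ℝ) ^ (-((k * (n - 2) : ℕ) : ℤ) - 2) *
        exp (((n : ℝ) - 2) * (-(p * k) + ((k : ℝ) - 1) * p * r / ((r : ℝ) - 1))) *
        exp (2 * p / ((r : ℝ) - 1)) ≤
      2 * (log n / (n : ℝ)) ^ ((k : ℝ) * ((r : ℝ) - 1) / r) *
        (r : ℝ) ^ (-((k * (n - 1) : ℕ) : ℤ) - 1) := by
  have hn0 : (0 : ℝ) < n := by positivity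
  have hr0 : (0 : ℝ) < r := by positivity
  have hr1 : (r : ℝ) - 1 ≠ 0 := by
    have : (2 : ℝ) ≤ r := by exact_mod_cast hr
    linarith
  have hkR : (1 : ℝ) ≤ k := by exact_mod_cast hk
  have hkrR : (k : ℝ) ≤ r := by exact_mod_cast hkr
  set L := log (n : ℝ)
  set M := log ((n : ℝ) / L)
  have hL0 : 0 < L := by linarith
  have hx : 0 < L / n := by positivity
  have hlog_x : log (L / n) = -M := by rw [← inv_div, log_inv]
  have hM : M = L - log L := log_div hn0.ne' hL0.ne'
  have hM0 : 0 ≤ M := by linarith [log_le_sub_one_of_pos hL0]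
  have hML : M ≤ L := by linarith [log_nonneg hL]
  have hp_div : p / ((r : ℝ) - 1) = M / n * (r : ℝ)⁻¹ := by
    rw [hp]
    field_simp
  have hexp : exp (((n : ℝ) - 2) * (-(p * k) + ((k : ℝ) - 1) * p * r / ((r : ℝ) - 1))) *
      exp (2 * p / ((r : ℝ) - 1)) =
        exp (M * (2 + 2 * (r - k)) / (r * n)) * (L / n) ^ (((r : ℝ) - k) / r) := by
    rw [← exp_add, hp, chain_exponent_eq hn0.ne' hr0.ne' hr1, exp_add,
      rpow_def_of_pos hx, hlog_x]
  calc (p / ((r : ℝ) - 1)) ^ (k - 1) * (r : ℝ) ^ (-((k * (n - 2) : ℕ) : ℤ) - 2) *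
        exp (((n : ℝ) - 2) * (-(p * k) + ((k : ℝ) - 1) * p * r / ((r : ℝ) - 1))) *
        exp (2 * p / ((r : ℝ) - 1))
      = (M / n) ^ (k - 1) * exp (M * (2 + 2 * (r - k)) / (r * n)) *
          (L / n) ^ (((r : ℝ) - k) / r) * (r : ℝ) ^ (-((k * (n - 1) : ℕ) : ℤ) - 1) := by
        rw [mul_assoc _ (exp _), hexp, hp_div, mul_pow,
          ← inv_pow_mul_zpow_chain hr0.ne' hn hk]
        ring
    _ ≤ (L / n) ^ (k - 1) * 2 * (L / n) ^ (((r : ℝ) - k) / r) *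
          (r : ℝ) ^ (-((k * (n - 1) : ℕ) : ℤ) - 1) := by
        gcongr
        exact exp_chain_error_le_two hn0 hkR hkrR hM0 hML hsmall
    _ = 2 * (L / n) ^ ((k : ℝ) * ((r : ℝ) - 1) / r) *
          (r : ℝ) ^ (-((k * (n - 1) : ℕ) : ℤ) - 1) := by
        rw [← rpow_pred_mul_rpow hx hr0.ne' hk]
        ring

theorem chain_prob_bound :
    ∃ N : ℕ, ∀ n : ℕ, N ≤ n → ∀ r k : ℕ,
      2 ≤ r → (r : ℝ) < (Real.log n) ^ ((1 : ℝ) / 5) → 1 ≤ k → k ≤ r →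
      (((((r : ℝ) - 1) / r) * Real.log ((n : ℝ) / Real.log n) / n) / ((r : ℝ) - 1)) ^ (k - 1) *
          (r : ℝ) ^ (-((k * (n - 2) : ℕ) : ℤ) - 2) *
          Real.exp (((n : ℝ) - 2) *
            (-((((r : ℝ) - 1) / r) * Real.log ((n : ℝ) / Real.log n) / n * k) +
              ((k : ℝ) - 1) * ((((r : ℝ) - 1) / r) * Real.log ((n : ℝ) / Real.log n) / n) * r /
                ((r : ℝ) - 1))) *
          Real.exp (2 * ((((r : ℝ) - 1) / r) * Real.log ((n : ℝ) / Real.log n) / n) / ((r : ℝ) - 1)) ≤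
        2 * (Real.log n / (n : ℝ)) ^ ((k : ℝ) * ((r : ℝ) - 1) / r) *
          (r : ℝ) ^ (-((k * (n - 1) : ℕ) : ℤ) - 1) := by
  obtain ⟨N, hN⟩ := eventually_atTop.1 eventually_log_natCast_bounds
  refine ⟨N, fun n hn r k hr _ hk hkr => ?_⟩
  obtain ⟨hn2, hL, hsmall⟩ := hN n hn
  exact chain_prob_bound_of_log_le hn2 hr hk hkr hL hsmall rfl
end

section
/- Let M, n, r be such that M ≤ 0.01 (n/ln n)^{(r-1)/r} r^{n-1} and r ≥ 2, n ≥ 2. Then the sum over k = 1 to r of 2 * C(M, k) * 2r * (ln n/n)^{k(r-1)/r} * r^{-(n-1)k - 1} is at most 0.04e, where C(M,k) = M^k/k! is used as an upper bound for the binomial coefficient. -/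
/-!
Raising the bound on `M` to the `k`-th power cancels the factor
`(ln n / n) ^ (k (r - 1) / r) * r ^ (-(n - 1) k)` exactly, so the `k`-th term is at most
`4 * 0.01 ^ k / k! ≤ 0.04 / k!`, and `∑ 1 / k! ≤ e`.
-/

open Finset Real Nat

theorem pow_mul_rpow_le_pow_of_le_mul_inv_rpow {M c x ρ : ℝ} (hM0 : 0 ≤ M) (hc : 0 ≤ c)
    (hx : 0 ≤ x) (hM : M ≤ c * x⁻¹ ^ ρ) (k : ℕ) : M ^ k * x ^ ((k : ℝ) * ρ) ≤ c ^ k := by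
  refine mul_le_of_le_mul_inv₀ (pow_nonneg hc k) (rpow_nonneg hx _) ?_
  calc M ^ k ≤ (c * x⁻¹ ^ ρ) ^ k := pow_le_pow_left₀ hM0 hM k
    _ = c ^ k * (x ^ ((k : ℝ) * ρ))⁻¹ := by
      rw [mul_pow, inv_rpow hx, inv_pow, ← rpow_mul_natCast hx, mul_comm ρ]

theorem union_bound_term_le {M x ρ : ℝ} {r m k : ℕ} (hM0 : 0 ≤ M) (hx : 0 ≤ x) (hr : r ≠ 0)
    (hk : k ≠ 0) (hM : M ≤ 0.01 * (r : ℝ) ^ m * x⁻¹ ^ ρ) :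
    2 * (M ^ k / k !) * (2 * r) * x ^ ((k : ℝ) * ρ) * (r : ℝ) ^ (-((m * k : ℕ) : ℤ) - 1) ≤
      0.04 / k ! := by
  have hr' : (r : ℝ) ≠ 0 := by exact_mod_cast hr
  have hcancel : (r : ℝ) * r ^ (m * k) * r ^ (-((m * k : ℕ) : ℤ) - 1) = 1 := by
    rw [zpow_sub_one₀ hr', zpow_neg, zpow_natCast]
    field_simp
  calc 2 * (M ^ k / k !) * (2 * r) * x ^ ((k : ℝ) * ρ) * (r : ℝ) ^ (-((m * k : ℕ) : ℤ) - 1)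
      = 4 / k ! * (M ^ k * x ^ ((k : ℝ) * ρ)) * (r * r ^ (-((m * k : ℕ) : ℤ) - 1)) := by ring
    _ ≤ 4 / k ! * (0.01 * (r : ℝ) ^ m) ^ k * (r * r ^ (-((m * k : ℕ) : ℤ) - 1)) := by
      gcongr
      exact pow_mul_rpow_le_pow_of_le_mul_inv_rpow hM0 (by positivity) hx hM k
    _ = 4 / k ! * 0.01 ^ k * ((r : ℝ) * r ^ (m * k) * r ^ (-((m * k : ℕ) : ℤ) - 1)) := by ring
    _ ≤ 0.04 / k ! := by
      rw [hcancel, mul_one, mul_comm, ← mul_div_assoc]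
      gcongr
      linarith [pow_le_of_le_one (by norm_num : (0 : ℝ) ≤ 0.01) (by norm_num) hk]

theorem sum_Icc_one_inv_factorial_le_exp_one (r : ℕ) : ∑ k ∈ Icc 1 r, 1 / (k ! : ℝ) ≤ exp 1 := by
  calc ∑ k ∈ Icc 1 r, 1 / (k ! : ℝ) ≤ ∑ k ∈ range (r + 1), (1 : ℝ) ^ k / k ! := by
        simp only [one_pow]
        refine sum_le_sum_of_subset_of_nonneg ?_ fun _ _ _ => by positivity
        intro k hk
        simp only [mem_Icc, mem_range] at hk ⊢
        omega
    _ ≤ exp 1 := sum_le_exp_of_nonneg zero_le_one _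

theorem union_bound_sum_le_general (M : ℝ) (n r : ℕ) (hM0 : 0 ≤ M)
    (hM : M ≤ 0.01 * ((n : ℝ) / Real.log n) ^ (((r : ℝ) - 1) / r) * (r : ℝ) ^ (n - 1)) :
    ∑ k ∈ Finset.Icc 1 r,
        2 * (M ^ k / (Nat.factorial k : ℝ)) * (2 * (r : ℝ)) *
          (Real.log n / (n : ℝ)) ^ ((k : ℝ) * ((r : ℝ) - 1) / r) *
          (r : ℝ) ^ (-(((n - 1) * k : ℕ) : ℤ) - 1) ≤
      0.04 * Real.exp 1 := by
  have hx : 0 ≤ Real.log n / n := div_nonneg (Real.log_natCast_nonneg n) n.cast_nonneg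
  have hM' : M ≤ 0.01 * (r : ℝ) ^ (n - 1) * (Real.log n / n)⁻¹ ^ (((r : ℝ) - 1) / r) := by
    rw [inv_div]; linarith
  calc _ ≤ ∑ k ∈ Icc 1 r, 0.04 * (1 / (k ! : ℝ)) := by
        refine sum_le_sum fun k hk => ?_
        obtain ⟨hk1, hkr⟩ := mem_Icc.mp hk
        rw [mul_div_assoc, mul_one_div]
        exact union_bound_term_le hM0 hx (by omega) (by omega) hM'
    _ ≤ 0.04 * exp 1 := by
        rw [← mul_sum]
        gcongr
        exact sum_Icc_one_inv_factorial_le_exp_one r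

theorem union_bound_sum_le (M : ℝ) (n r : ℕ) (hM0 : 0 ≤ M) (hn : 2 ≤ n) (hr : 2 ≤ r)
    (hM : M ≤ 0.01 * ((n : ℝ) / Real.log n) ^ (((r : ℝ) - 1) / r) * (r : ℝ) ^ (n - 1)) :
    ∑ k ∈ Finset.Icc 1 r,
        2 * (M ^ k / (Nat.factorial k : ℝ)) * (2 * (r : ℝ)) *
          (Real.log n / (n : ℝ)) ^ ((k : ℝ) * ((r : ℝ) - 1) / r) *
          (r : ℝ) ^ (-(((n - 1) * k : ℕ) : ℤ) - 1) ≤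
      0.04 * Real.exp 1 :=
  union_bound_sum_le_general M n r hM0 hM
end

section
/- Let n ≥ 2, r ≥ 2 with r < (ln n)^{1/5}, p = ((r-1)/r) ln(n/ln n)/n, m ≥ n²(r-1)/(2 ln n), and q = mp/(r(r-1)) + 2 sqrt(13 m ln r / r) + ((r+1)/r)(n/ln n). Then for all sufficiently large n: r(r-1)(n-1) q / m ≤ p(n-1) + (1/r) ln(n/ln n). -/
/-!
Write `q = mp/(r(r-1)) + E`. The main term contributes exactly `p(n-1)` to `r(r-1)(n-1)q/m`,
and the lower bound `m ≥ n²(r-1)/(2 ln n)` bounds the contribution of the two error terms of `E`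
by `r·√(104 ln n ln r)` and `2(r+1)`. Since `r < (ln n)^{1/5}`, both are `o(ln n / r)`, while
`ln(n / ln n) = ln n - ln ln n` is asymptotic to `ln n`.
-/

open Filter Real

lemma sqrt_deviation_term_le {n r t m ℓ : ℝ} (hn : 1 ≤ n) (hr : 1 ≤ r) (hℓ : 0 ≤ ℓ)
    (hm0 : 0 < m) (hm : n ^ 2 * (r - 1) ≤ 2 * t * m) :
    r * (r - 1) * (n - 1) * (2 * √(13 * m * ℓ / r)) / m ≤ r * √(104 * t * ℓ) := by
  have hr0 : 0 < r := by linarith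
  have ht : 0 ≤ t := by nlinarith
  rw [show r * √(104 * t * ℓ) = √(r ^ 2 * (104 * t * ℓ)) by
    rw [sqrt_mul (sq_nonneg r), sqrt_sq hr0.le]]
  apply le_sqrt_of_sq_le
  calc (r * (r - 1) * (n - 1) * (2 * √(13 * m * ℓ / r)) / m) ^ 2
      = 52 * r * (r - 1) * ℓ * ((r - 1) * (n - 1) ^ 2) / m := by
        have h13 : 0 ≤ 13 * m * ℓ / r := by positivity
        simp only [div_pow, mul_pow, sq_sqrt h13]
        field_simp
        ring
    _ ≤ 52 * r * (r - 1) * ℓ * (2 * t * m) / m := by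
        gcongr 52 * r * (r - 1) * ℓ * ?_ / m
        nlinarith
    _ = 104 * (r * (r - 1)) * t * ℓ := by field_simp; ring
    _ ≤ r ^ 2 * (104 * t * ℓ) := by
        have : r * (r - 1) ≤ r ^ 2 := by nlinarith
        nlinarith [mul_nonneg ht hℓ]

lemma balance_term_le {n r t m : ℝ} (hn : 0 ≤ n) (hr : 1 ≤ r) (ht : 0 < t) (hm0 : 0 < m)
    (hm : n ^ 2 * (r - 1) ≤ 2 * t * m) :
    r * (r - 1) * (n - 1) * ((r + 1) / r * (n / t)) / m ≤ 2 * (r + 1) := by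
  have hr0 : 0 < r := by linarith
  calc r * (r - 1) * (n - 1) * ((r + 1) / r * (n / t)) / m
      = (r + 1) * ((n - 1) * n * (r - 1)) / (t * m) := by field_simp
    _ ≤ (r + 1) * (2 * t * m) / (t * m) := by
        gcongr (r + 1) * ?_ / (t * m)
        nlinarith
    _ = 2 * (r + 1) := by field_simp

-- `u` stands for `(ln n)^{1/5}`, which makes every quantity polynomial in `u` except `ln r ≤ ln u`.
lemma eventually_error_terms_le :
    ∀ᶠ u : ℝ in atTop, ∀ r : ℝ, 2 ≤ r → r < u →
      r * (r * √(104 * u ^ 5 * log r) + 2 * (r + 1)) ≤ u ^ 5 - log (u ^ 5) := by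
  have hlog := isLittleO_log_id_atTop.bound (show (0 : ℝ) < 1 / 1664 by norm_num)
  filter_upwards [eventually_ge_atTop 3, hlog] with u hu3 hlogu r hr2 hru
  have hu0 : 0 < u := by linarith
  have hlogu0 : 0 ≤ log u := log_nonneg (by linarith)
  rw [norm_of_nonneg hlogu0, id, norm_of_nonneg hu0.le] at hlogu
  have hlogr : log r ≤ log u := log_le_log (by linarith) hru.le
  have hsqrt : √(104 * u ^ 5 * log r) ≤ u ^ 3 / 4 := by
    rw [sqrt_le_left (by positivity)]
    calc 104 * u ^ 5 * log r ≤ 104 * u ^ 5 * (1 / 1664 * u) := by gcongr; linarith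
      _ = (u ^ 3 / 4) ^ 2 := by ring
  have hu_cube : 27 ≤ u ^ 3 := by
    calc (27 : ℝ) = 3 ^ 3 := by norm_num
      _ ≤ u ^ 3 := pow_le_pow_left₀ (by norm_num) hu3 3
  calc r * (r * √(104 * u ^ 5 * log r) + 2 * (r + 1))
      ≤ u * (u * (u ^ 3 / 4) + 2 * (u + 1)) := by gcongr
    _ ≤ u ^ 5 / 2 := by nlinarith [mul_le_mul_of_nonneg_left hu_cube (sq_nonneg u)]
    _ ≤ u ^ 5 - log (u ^ 5) := by
        rw [log_pow]
        nlinarith [mul_le_mul_of_nonneg_left hu_cube hu0.le]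

lemma helper_exponent_le {n r t m ℓ p : ℝ} (hn : 1 ≤ n) (hr : 1 < r) (ht : 0 < t) (hℓ : 0 ≤ ℓ)
    (hm : n ^ 2 * (r - 1) ≤ 2 * t * m) :
    r * (r - 1) * (n - 1) * (m * p / (r * (r - 1)) + 2 * √(13 * m * ℓ / r)
        + (r + 1) / r * (n / t)) / m
      ≤ p * (n - 1) + (r * √(104 * t * ℓ) + 2 * (r + 1)) := by
  have hm0 : 0 < m := by
    have : 0 < n ^ 2 * (r - 1) := mul_pos (by positivity) (sub_pos.mpr hr)
    nlinarith
  have hr0 : r ≠ 0 := by positivity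
  have hr1 : r - 1 ≠ 0 := (sub_pos.mpr hr).ne'
  calc r * (r - 1) * (n - 1) * (m * p / (r * (r - 1)) + 2 * √(13 * m * ℓ / r)
        + (r + 1) / r * (n / t)) / m
      = p * (n - 1) + (r * (r - 1) * (n - 1) * (2 * √(13 * m * ℓ / r)) / m
          + r * (r - 1) * (n - 1) * ((r + 1) / r * (n / t)) / m) := by
        field_simp
        ring
    _ ≤ p * (n - 1) + (r * √(104 * t * ℓ) + 2 * (r + 1)) := by
        gcongr
        · exact sqrt_deviation_term_le hn hr.le hℓ hm0 hm
        · exact balance_term_le (by linarith) hr.le ht hm0 hm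

theorem q_exponent_bound :
    ∃ N : ℕ, ∀ n : ℕ, N ≤ n → ∀ m r : ℕ,
      2 ≤ r →
      (r : ℝ) < (Real.log n) ^ ((1 : ℝ) / 5) →
      (m : ℝ) ≥ (n : ℝ) ^ 2 * ((r : ℝ) - 1) / (2 * Real.log n) →
      (r : ℝ) * ((r : ℝ) - 1) * ((n : ℝ) - 1) *
          ((m : ℝ) * ((((r : ℝ) - 1) / r) * Real.log ((n : ℝ) / Real.log n) / n) /
              ((r : ℝ) * ((r : ℝ) - 1)) +
            2 * Real.sqrt (13 * (m : ℝ) * Real.log r / r) +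
            (((r : ℝ) + 1) / r) * ((n : ℝ) / Real.log n)) / (m : ℝ) ≤
        ((((r : ℝ) - 1) / r) * Real.log ((n : ℝ) / Real.log n) / n) * ((n : ℝ) - 1) +
          (1 / r) * Real.log ((n : ℝ) / Real.log n) := by
  have hu : Tendsto (fun n : ℕ => log n ^ ((1 : ℝ) / 5)) atTop atTop :=
    (tendsto_rpow_atTop (by norm_num)).comp (tendsto_log_atTop.comp tendsto_natCast_atTop_atTop)
  obtain ⟨N, hN⟩ := eventually_atTop.mp
    ((eventually_ge_atTop 2).and (hu.eventually eventually_error_terms_le))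
  refine ⟨N, fun n hNn m r hr hru hm => ?_⟩
  obtain ⟨hn, herror⟩ := hN n hNn
  have hn' : (2 : ℝ) ≤ n := by exact_mod_cast hn
  have hr' : (2 : ℝ) ≤ r := by exact_mod_cast hr
  have ht : 0 < log n := log_pos (by linarith)
  have hu5 : (log n ^ ((1 : ℝ) / 5)) ^ 5 = log n := by
    rw [← rpow_natCast, ← rpow_mul ht.le]
    norm_num
  have hm' : (n : ℝ) ^ 2 * (r - 1) ≤ 2 * log n * m := by
    rwa [ge_iff_le, div_le_iff₀ (by positivity), mul_comm (m : ℝ)] at hm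
  refine (helper_exponent_le (by linarith) (by linarith) ht (log_nonneg (by linarith)) hm').trans ?_
  gcongr
  rw [one_div_mul_eq_div, le_div_iff₀' (by positivity), log_div (by positivity) ht.ne']
  simpa only [hu5] using herror r hr' hru
end

section
/- Let n ≥ 2, r ≥ 2, p = ((r-1)/r) ln(n/ln n)/n, and let M ≤ 0.01 (n/ln n)^{(r-1)/r} r^{n-1}. Then M * r^{-n} * (n/ln n)^{1/r} + Σ_{k=2}^{r} 2 M * C(M, k-1) * r^{-k(n-1)-1} * e^{3p} * (n/ln n)^{k/r - k + 1} ≤ 0.02 * n/(r ln n), for all sufficiently large n. -/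
/-!
Write `L = n / log n`. The hypothesis on `M` makes the `k`-th power of `M` cancel all powers of
`r` and of `L` in the `k`-th term, leaving `0.01 ^ k * L / r`. So the first term is at most
`0.01 * L / r`. Once `log n ≥ 1` we have `log L ≤ L ≤ n`, hence `3p ≤ 3` and `e^{3p} ≤ e^3 < 21`,
and the sum is dominated by `2 e^3 (L / r)` times a geometric series in `0.01` from `k = 2`,
which is far below `0.01 * L / r`.
-/

open Real Finset

lemma one_le_div_log {x : ℝ} (hx : 1 < x) : 1 ≤ x / log x := by
  have hlog : 0 < log x := log_pos hx
  rw [one_le_div hlog]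
  linarith [log_le_sub_one_of_pos (zero_lt_one.trans hx)]

lemma log_div_log_le_self {x : ℝ} (hx : exp 1 ≤ x) : log (x / log x) ≤ x := by
  have hx1 : 1 < x := (one_lt_exp_iff.mpr one_pos).trans_le hx
  have hlog : 1 ≤ log x := (le_log_iff_exp_le (zero_lt_one.trans hx1)).mpr hx
  have hL : 0 < x / log x := zero_lt_one.trans_le (one_le_div_log hx1)
  calc log (x / log x) ≤ x / log x - 1 := log_le_sub_one_of_pos hL
    _ ≤ x := by linarith [div_le_self (zero_lt_one.trans hx1).le hlog]

lemma exp_three_mul_log_div_log_le {c x : ℝ} (hc1 : c ≤ 1) (hx : exp 1 ≤ x) :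
    exp (3 * (c * log (x / log x) / x)) ≤ exp 3 := by
  have hx1 : 1 < x := (one_lt_exp_iff.mpr one_pos).trans_le hx
  have hlogL : 0 ≤ log (x / log x) := log_nonneg (one_le_div_log hx1)
  have hcL : c * log (x / log x) ≤ x :=
    (mul_le_of_le_one_left hlogL hc1).trans (log_div_log_le_self hx)
  have : c * log (x / log x) / x ≤ 1 := (div_le_one (zero_lt_one.trans hx1)).mpr hcL
  gcongr
  linarith

lemma pow_mul_zpow_neg_sub_one {G₀ : Type*} [GroupWithZero G₀] {a : G₀} (ha : a ≠ 0) (j : ℕ) :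
    a ^ j * a ^ (-(j : ℤ) - 1) = a⁻¹ := by
  rw [← zpow_natCast, ← zpow_add₀ ha, show (j : ℤ) + (-(j : ℤ) - 1) = -1 by ring, zpow_neg_one]

lemma rpow_pow_mul_rpow_eq_self {L r : ℝ} (hL : 0 < L) (hr : r ≠ 0) (k : ℕ) :
    (L ^ ((r - 1) / r)) ^ k * L ^ ((k : ℝ) / r - k + 1) = L := by
  rw [← rpow_natCast, ← rpow_mul hL.le, ← rpow_add hL,
    show (r - 1) / r * k + (k / r - k + 1) = 1 by field_simp; ring, rpow_one]

lemma pow_mul_zpow_mul_rpow_le {c L M r : ℝ} {m : ℕ} (hr : 0 < r) (hL : 0 < L) (hM0 : 0 ≤ M)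
    (hM : M ≤ c * L ^ ((r - 1) / r) * r ^ m) (k : ℕ) :
    M ^ k * r ^ (-((k * m : ℕ) : ℤ) - 1) * L ^ ((k : ℝ) / r - k + 1) ≤ c ^ k * L / r := by
  calc M ^ k * r ^ (-((k * m : ℕ) : ℤ) - 1) * L ^ ((k : ℝ) / r - k + 1)
      ≤ (c * L ^ ((r - 1) / r) * r ^ m) ^ k * r ^ (-((k * m : ℕ) : ℤ) - 1) *
          L ^ ((k : ℝ) / r - k + 1) := by gcongr
    _ = c ^ k * ((L ^ ((r - 1) / r)) ^ k * L ^ ((k : ℝ) / r - k + 1)) *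
          (r ^ (k * m) * r ^ (-((k * m : ℕ) : ℤ) - 1)) := by
        rw [mul_pow, mul_pow, ← pow_mul, mul_comm m k]; ring
    _ = c ^ k * L / r := by
        rw [rpow_pow_mul_rpow_eq_self hL hr.ne', pow_mul_zpow_neg_sub_one hr.ne', div_eq_mul_inv]

lemma summand_le {c E L M r : ℝ} {m k : ℕ} (hr : 0 < r) (hL : 0 < L) (hM0 : 0 ≤ M)
    (hM : M ≤ c * L ^ ((r - 1) / r) * r ^ m) (hE : 0 ≤ E) (hk : 1 ≤ k) :
    2 * M * (M ^ (k - 1) / ((k - 1).factorial : ℝ)) * r ^ (-((k * m : ℕ) : ℤ) - 1) * E *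
        L ^ ((k : ℝ) / r - k + 1) ≤ 2 * E * (c ^ k * L / r) := by
  have hfact : M * (M ^ (k - 1) / ((k - 1).factorial : ℝ)) ≤ M ^ k := by
    calc M * (M ^ (k - 1) / ((k - 1).factorial : ℝ)) ≤ M * M ^ (k - 1) := by
          gcongr
          exact div_le_self (by positivity) (by exact_mod_cast (k - 1).factorial_pos)
      _ = M ^ k := by rw [← pow_succ', Nat.sub_add_cancel hk]
  calc 2 * M * (M ^ (k - 1) / ((k - 1).factorial : ℝ)) * r ^ (-((k * m : ℕ) : ℤ) - 1) * E *
        L ^ ((k : ℝ) / r - k + 1)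
      = 2 * E * (M * (M ^ (k - 1) / ((k - 1).factorial : ℝ)) * r ^ (-((k * m : ℕ) : ℤ) - 1) *
          L ^ ((k : ℝ) / r - k + 1)) := by ring
    _ ≤ 2 * E * (M ^ k * r ^ (-((k * m : ℕ) : ℤ) - 1) * L ^ ((k : ℝ) / r - k + 1)) := by gcongr
    _ ≤ 2 * E * (c ^ k * L / r) := by gcongr; exact pow_mul_zpow_mul_rpow_le hr hL hM0 hM k

lemma mul_zpow_neg_mul_rpow_one_div_le {c L M r : ℝ} {n : ℕ} (hn : 1 ≤ n) (hr : 0 < r)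
    (hL : 0 < L) (hM0 : 0 ≤ M) (hM : M ≤ c * L ^ ((r - 1) / r) * r ^ (n - 1)) :
    M * r ^ (-(n : ℤ)) * L ^ (1 / r) ≤ c * L / r := by
  have := pow_mul_zpow_mul_rpow_le hr hL hM0 hM 1
  rwa [pow_one, pow_one, Nat.cast_one, sub_add_cancel, one_mul,
    show -((n - 1 : ℕ) : ℤ) - 1 = -(n : ℤ) by omega] at this

lemma sum_Icc_two_summand_le {c E L M r : ℝ} {m s : ℕ} (hc0 : 0 ≤ c) (hc1 : c < 1) (hr : 0 < r)
    (hL : 0 < L) (hM0 : 0 ≤ M) (hM : M ≤ c * L ^ ((r - 1) / r) * r ^ m) (hE : 0 ≤ E) :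
    ∑ k ∈ Icc 2 s, 2 * M * (M ^ (k - 1) / ((k - 1).factorial : ℝ)) *
        r ^ (-((k * m : ℕ) : ℤ) - 1) * E * L ^ ((k : ℝ) / r - k + 1) ≤
      2 * E * (L / r) * (c ^ 2 / (1 - c)) := by
  calc _ ≤ ∑ k ∈ Icc 2 s, 2 * E * (c ^ k * L / r) :=
        sum_le_sum fun k hk => summand_le hr hL hM0 hM hE (by linarith [(mem_Icc.mp hk).1])
    _ = 2 * E * (L / r) * ∑ k ∈ Ico 2 (s + 1), c ^ k := by
        rw [mul_sum, Ico_add_one_right_eq_Icc]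
        exact sum_congr rfl fun k _ => by ring
    _ ≤ 2 * E * (L / r) * (c ^ 2 / (1 - c)) := by
        gcongr
        exact geom_sum_Ico_le_of_lt_one hc0 hc1

theorem dangerous_edges_expectation :
    ∃ N : ℕ, ∀ n : ℕ, N ≤ n → ∀ r : ℕ, 2 ≤ r → ∀ M : ℝ, 0 ≤ M →
      M ≤ 0.01 * ((n : ℝ) / Real.log n) ^ (((r : ℝ) - 1) / r) * (r : ℝ) ^ (n - 1) →
      M * (r : ℝ) ^ (-(n : ℤ)) * ((n : ℝ) / Real.log n) ^ ((1 : ℝ) / r) +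
          ∑ k ∈ Finset.Icc 2 r,
            2 * M * (M ^ (k - 1) / (Nat.factorial (k - 1) : ℝ)) *
              (r : ℝ) ^ (-((k * (n - 1) : ℕ) : ℤ) - 1) *
              Real.exp (3 * ((((r : ℝ) - 1) / r) * Real.log ((n : ℝ) / Real.log n) / n)) *
              ((n : ℝ) / Real.log n) ^ ((k : ℝ) / r - (k : ℝ) + 1) ≤
        0.02 * (n : ℝ) / ((r : ℝ) * Real.log n) := by
  refine ⟨3, fun n hn r hr M hM0 hM => ?_⟩
  have hn_e : exp 1 ≤ n := by
    linarith [exp_one_lt_d9, (show (3 : ℝ) ≤ n by exact_mod_cast hn)]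
  have hr0 : (0 : ℝ) < r := by positivity
  set L := (n : ℝ) / log n
  have hL : 0 < L := zero_lt_one.trans_le (one_le_div_log (by linarith [add_one_le_exp 1]))
  have hLr : 0 ≤ L / r := by positivity
  have hexp : exp (3 * (((r : ℝ) - 1) / r * log L / n)) ≤ exp 3 :=
    exp_three_mul_log_div_log_le (by rw [div_le_one hr0]; linarith) hn_e
  have hexp3 : exp 3 ≤ 21 := by
    rw [show (3 : ℝ) = 1 + 1 + 1 by norm_num, exp_add, exp_add]
    nlinarith [exp_one_lt_d9, exp_pos 1]
  rw [show 0.02 * (n : ℝ) / (r * log n) = 0.02 * (L / r) by simp only [L]; field_simp]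
  calc _ ≤ 0.01 * L / r + 2 * exp (3 * (((r : ℝ) - 1) / r * log L / n)) * (L / r) *
          ((0.01 : ℝ) ^ 2 / (1 - 0.01)) :=
        add_le_add (mul_zpow_neg_mul_rpow_one_div_le (by omega) hr0 hL hM0 hM)
          (sum_Icc_two_summand_le (by norm_num) (by norm_num) hr0 hL hM0 hM (exp_pos _).le)
    _ ≤ 0.02 * (L / r) := by
        rw [mul_div_assoc]
        nlinarith [mul_le_mul_of_nonneg_right (hexp.trans hexp3) hLr]
end

section
/- For reals p ∈ (0, 1/2], r ≥ 2 integer, y_1, ..., y_{k-1} ∈ [0, p/(r-1)], and n ≥ 3, k ≥ 2 integers, the product ((1-p)/r + y_1)^{n-1} · ∏_{j=2}^{k-1} ((1-p)/r + y_j + p/(r-1) - y_{j-1})^{n-2} · ((1-p)/r + p/(r-1) - y_{k-1})^{n-1} is at most r^{-k(n-2)-2} * exp((n-2)(-pk + (k-1)pr/(r-1)) + 2p/(r-1)). -/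
/-!
Write each factor as `(1 - p) / r + t = (1 + (r t - p)) / r` with slack `t ≥ 0` and bound
`1 + x ≤ exp x`: the product is at most `r ^ -(k (n - 2) + 2)` times the exponential of the
weighted sum of the `r t - p`. The slacks of the inner edges, `y j + p / (r - 1) - y (j - 1)`,
telescope, so that sum depends on `y` only through `r (y 1 - y (k - 1))`, which is at most
`r p / (r - 1)`; the identity `r p / (r - 1) = p + p / (r - 1)` then gives the stated exponent.
-/

open Finset

theorem sum_Icc_succ_sub_pred {M : Type*} [AddCommGroup M] (f : ℕ → M) {m n : ℕ}
    (h : m ≤ n) : ∑ j ∈ Icc (m + 1) n, (f j - f (j - 1)) = f n - f m := by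
  induction n, h using Nat.le_induction with
  | base => simp
  | succ n _ ih =>
    rw [sum_Icc_succ_top (by omega), ih, Nat.add_sub_cancel]
    abel

theorem one_sub_div_add_pow_le_exp {p r t : ℝ} (hp : p ≤ 1) (hr : 0 < r) (ht : 0 ≤ t)
    (m : ℕ) :
    ((1 - p) / r + t) ^ m ≤ Real.exp (m * (r * t - p)) / r ^ m := by
  have hfactor : (1 - p) / r + t = (1 + (r * t - p)) / r := by field_simp; ring
  rw [hfactor, div_pow, Real.exp_nat_mul]
  gcongr
  · linarith [mul_nonneg hr.le ht]
  · linarith [Real.add_one_le_exp (r * t - p)]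

theorem prod_one_sub_div_add_pow_le_exp {ι : Type*} (s : Finset ι) {p r : ℝ} (hp : p ≤ 1)
    (hr : 0 < r) {t : ι → ℝ} (ht : ∀ i ∈ s, 0 ≤ t i) (m : ℕ) :
    ∏ i ∈ s, ((1 - p) / r + t i) ^ m ≤
      Real.exp (m * ∑ i ∈ s, (r * t i - p)) / r ^ (#s * m) := by
  calc ∏ i ∈ s, ((1 - p) / r + t i) ^ m
      ≤ ∏ i ∈ s, Real.exp (m * (r * t i - p)) / r ^ m :=
        prod_le_prod (fun i hi => by have := ht i hi; positivity)
          fun i hi => one_sub_div_add_pow_le_exp hp hr (ht i hi) m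
    _ = _ := by rw [prod_div_distrib, ← Real.exp_sum, mul_sum, prod_const, pow_mul']

theorem chain_prod_le_exp {p r q : ℝ} (hp : p ≤ 1) (hr : 0 < r) {k : ℕ} (hk : 2 ≤ k)
    {y : ℕ → ℝ} (hy : ∀ j ∈ Icc 1 (k - 1), 0 ≤ y j ∧ y j ≤ q) (m : ℕ) :
    ((1 - p) / r + y 1) ^ (m + 1) *
        (∏ j ∈ Icc 2 (k - 1), ((1 - p) / r + y j + q - y (j - 1)) ^ m) *
        ((1 - p) / r + q - y (k - 1)) ^ (m + 1) ≤
      Real.exp (r * (y 1 - y (k - 1) + (((k : ℝ) - 1) * m + 1) * q) - p * (k * m + 2)) /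
        r ^ (k * m + 2) := by
  obtain ⟨hy₁, -⟩ := hy 1 (by simp; omega)
  obtain ⟨-, hyₖ⟩ := hy (k - 1) (by simp; omega)
  have hslack : ∀ j ∈ Icc 2 (k - 1), 0 ≤ y j + (q - y (j - 1)) := fun j hj => by
    simp only [mem_Icc] at hj
    linarith [(hy j (by simp; omega)).1, (hy (j - 1) (by simp; omega)).2]
  have hcard : #(Icc 2 (k - 1)) = k - 2 := by simp; omega
  have hsum : ∑ j ∈ Icc 2 (k - 1), (r * (y j + (q - y (j - 1))) - p)
      = ((k - 2 : ℕ) : ℝ) * (r * q - p) + r * (y (k - 1) - y 1) := by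
    rw [← sum_Icc_succ_sub_pred y (by omega : 1 ≤ k - 1), mul_sum, ← hcard, ← nsmul_eq_mul,
      ← sum_const, ← sum_add_distrib]
    exact sum_congr rfl fun j _ => by ring
  have hdeg : (m + 1) + #(Icc 2 (k - 1)) * m + (m + 1) = k * m + 2 := by
    rw [hcard]
    zify [hk]
    ring
  calc _ ≤ Real.exp ((m + 1 : ℕ) * (r * y 1 - p)) / r ^ (m + 1) *
          (Real.exp (m * ∑ j ∈ Icc 2 (k - 1), (r * (y j + (q - y (j - 1))) - p)) /
            r ^ (#(Icc 2 (k - 1)) * m)) *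
          (Real.exp ((m + 1 : ℕ) * (r * (q - y (k - 1)) - p)) / r ^ (m + 1)) := by
        simp only [add_sub_assoc, add_assoc]
        gcongr ?_ * ?_ * ?_
        · exact prod_nonneg fun j hj => by have := hslack j hj; positivity
        · exact one_sub_div_add_pow_le_exp hp hr hy₁ _
        · exact prod_one_sub_div_add_pow_le_exp _ hp hr hslack _
        · exact one_sub_div_add_pow_le_exp hp hr (sub_nonneg.2 hyₖ) _
    _ = _ := by
        rw [← hdeg, hsum, div_mul_div_comm, div_mul_div_comm, ← Real.exp_add, ← Real.exp_add,
          ← pow_add, ← pow_add]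
        congr 2
        push_cast [Nat.cast_sub hk]
        ring

theorem conditional_chain_prob_pointwise_general (p : ℝ) (r n k : ℕ)
    (hp1 : p ≤ 1 / 2) (hr : 2 ≤ r) (hn : 3 ≤ n) (hk : 2 ≤ k)
    (y : ℕ → ℝ)
    (hy : ∀ j ∈ Finset.Icc 1 (k - 1), 0 ≤ y j ∧ y j ≤ p / ((r : ℝ) - 1)) :
    ((1 - p) / r + y 1) ^ (n - 1) *
        (∏ j ∈ Finset.Icc 2 (k - 1),
          ((1 - p) / r + y j + p / ((r : ℝ) - 1) - y (j - 1)) ^ (n - 2)) *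
        ((1 - p) / r + p / ((r : ℝ) - 1) - y (k - 1)) ^ (n - 1) ≤
      (r : ℝ) ^ (-((k * (n - 2) : ℕ) : ℤ) - 2) *
        Real.exp (((n : ℝ) - 2) * (-(p * k) + ((k : ℝ) - 1) * p * r / ((r : ℝ) - 1)) +
          2 * p / ((r : ℝ) - 1)) := by
  have hr0 : (0 : ℝ) < r := by positivity
  have hq : r * (p / ((r : ℝ) - 1)) = p + p / ((r : ℝ) - 1) := by
    have : (r : ℝ) - 1 ≠ 0 := by
      have : (2 : ℝ) ≤ r := by exact_mod_cast hr
      linarith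
    field_simp
    ring
  obtain ⟨-, hy₁q⟩ := hy 1 (by simp; omega)
  obtain ⟨hyₖ, -⟩ := hy (k - 1) (by simp; omega)
  calc _ ≤ Real.exp (r * (y 1 - y (k - 1) +
            (((k : ℝ) - 1) * (n - 2 : ℕ) + 1) * (p / ((r : ℝ) - 1))) -
          p * (k * (n - 2 : ℕ) + 2)) / r ^ (k * (n - 2) + 2) := by
        rw [show n - 1 = n - 2 + 1 by omega]
        exact chain_prod_le_exp (by linarith) hr0 hk hy (n - 2)
    _ ≤ Real.exp (((n : ℝ) - 2) * (-(p * k) + ((k : ℝ) - 1) * p * r / ((r : ℝ) - 1)) +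
          2 * p / ((r : ℝ) - 1)) / r ^ (k * (n - 2) + 2) := by
        gcongr Real.exp ?_ / _
        push_cast [Nat.cast_sub (by omega : 2 ≤ n)]
        linear_combination
          mul_le_mul_of_nonneg_left hy₁q hr0.le + mul_nonneg hr0.le hyₖ + 2 * hq
    _ = _ := by
        rw [zpow_sub₀ hr0.ne', zpow_neg, zpow_natCast, zpow_two, pow_add, pow_two]
        ring

theorem conditional_chain_prob_pointwise (p : ℝ) (r n k : ℕ)
    (hp0 : 0 < p) (hp1 : p ≤ 1 / 2) (hr : 2 ≤ r) (hn : 3 ≤ n) (hk : 2 ≤ k)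
    (y : ℕ → ℝ)
    (hy : ∀ j ∈ Finset.Icc 1 (k - 1), 0 ≤ y j ∧ y j ≤ p / ((r : ℝ) - 1)) :
    ((1 - p) / r + y 1) ^ (n - 1) *
        (∏ j ∈ Finset.Icc 2 (k - 1),
          ((1 - p) / r + y j + p / ((r : ℝ) - 1) - y (j - 1)) ^ (n - 2)) *
        ((1 - p) / r + p / ((r : ℝ) - 1) - y (k - 1)) ^ (n - 1) ≤
      (r : ℝ) ^ (-((k * (n - 2) : ℕ) : ℤ) - 2) *
        Real.exp (((n : ℝ) - 2) * (-(p * k) + ((k : ℝ) - 1) * p * r / ((r : ℝ) - 1)) +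
          2 * p / ((r : ℝ) - 1)) :=
  conditional_chain_prob_pointwise_general p r n k hp1 hr hn hk y hy
end
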